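/- Let w_0,...,w_n be positive integers, d = Σ w_i, and let a^s_j be the number of 0 ≤ k < d such that d divides no k·w_i and (Σ_i \overline{k w_i})/d = j. Then a^s_j = a^s_{n+1-j} for all 1 ≤ j ≤ n (the strict age counts are symmetric). -/
import Mathlib


open Finset

/-- The strict age count `aˢⱼ`: the number of `0 ≤ k < d` such that `d` divides no `k·wᵢ`
and the age `(∑ᵢ (k·wᵢ mod d))/d` equals `j` (i.e. `∑ᵢ (k·wᵢ mod d) = j·d`). -/
def strictAgeCount (n : ℕ) (w : Fin (n + 1) → ℕ) (d j : ℕ) : ℕ :=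
  ((Finset.range d).filter (fun k =>
    (∀ i, ¬ d ∣ k * w i) ∧ (∑ i, (k * w i) % d) = j * d)).card

private lemma mod_add_mod_eq (d a b : ℕ) (hab : d ∣ a + b) (ha : ¬ d ∣ a) :
    a % d + b % d = d := by
  have hd : 0 < d := by
    rcases Nat.eq_zero_or_pos d with h | h
    · subst h
      simp only [Nat.zero_dvd] at hab ha
      omega
    · exact h
  have h1 : (a + b) % d = 0 := Nat.mod_eq_zero_of_dvd hab
  have h2 : (a % d + b % d) % d = 0 := by rwa [Nat.add_mod] at h1
  obtain ⟨m, hm⟩ := Nat.dvd_of_mod_eq_zero h2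
  have ha' : a % d ≠ 0 := fun h => ha (Nat.dvd_of_mod_eq_zero h)
  have hla : a % d < d := Nat.mod_lt _ hd
  have hlb : b % d < d := Nat.mod_lt _ hd
  have hm1 : 1 ≤ m := by
    rcases Nat.eq_zero_or_pos m with h | h
    · subst h; simp at hm; omega
    · exact h
  have hm2 : m < 2 := by
    have : d * m < d * 2 := by omega
    exact Nat.lt_of_mul_lt_mul_left this
  have : m = 1 := by omega
  subst this; omega

private lemma key_map (n : ℕ) (w : Fin (n + 1) → ℕ) (d : ℕ) (hd : d = ∑ i, w i)
    (j k : ℕ)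
    (hk : k ∈ (Finset.range d).filter (fun k =>
      (∀ i, ¬ d ∣ k * w i) ∧ (∑ i, (k * w i) % d) = j * d)) :
    d - k ∈ (Finset.range d).filter (fun k =>
      (∀ i, ¬ d ∣ k * w i) ∧ (∑ i, (k * w i) % d) = (n + 1 - j) * d) := by
  simp only [mem_filter, mem_range] at hk ⊢
  obtain ⟨hkd, h1, h2⟩ := hk
  have hdpos : 0 < d := lt_of_le_of_lt (Nat.zero_le _) hkd
  have hk0 : k ≠ 0 := by
    rintro rfl
    exact h1 0 (by simp)
  refine ⟨by omega, ?_, ?_⟩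
  · intro i hdvd
    have hsub : d * w i - (d - k) * w i = k * w i := by
      rw [← Nat.sub_mul]
      congr 1
      omega
    exact h1 i (hsub ▸ Nat.dvd_sub (dvd_mul_right d (w i)) hdvd)
  · have hpair : ∀ i : Fin (n + 1), (k * w i) % d + ((d - k) * w i) % d = d := by
      intro i
      apply mod_add_mod_eq d _ _ _ (h1 i)
      have : k * w i + (d - k) * w i = d * w i := by
        rw [← Nat.add_mul]
        congr 1
        omega
      rw [this]
      exact dvd_mul_right d (w i)
    have hsum : (∑ i, (k * w i) % d) + (∑ i, ((d - k) * w i) % d) = (n + 1) * d := by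
      rw [← Finset.sum_add_distrib]
      rw [Finset.sum_congr rfl (fun i _ => hpair i)]
      simp [Finset.sum_const, mul_comm]
    rw [h2] at hsum
    rw [Nat.sub_mul]
    exact Nat.eq_sub_of_add_eq (by omega)

/-- Symmetry of strict age counts: `aˢⱼ = aˢ_{n+1−j}` for `1 ≤ j ≤ n`. -/
theorem strict_age_count_symmetric
    (n : ℕ) (w : Fin (n + 1) → ℕ) (hw : ∀ i, 0 < w i) (d : ℕ) (hd : d = ∑ i, w i)
    (j : ℕ) (hj1 : 1 ≤ j) (hjn : j ≤ n) :
    strictAgeCount n w d j = strictAgeCount n w d (n + 1 - j) := by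
  unfold strictAgeCount
  have hjj : n + 1 - (n + 1 - j) = j := by omega
  apply Finset.card_bij' (fun k _ => d - k) (fun k _ => d - k)
  · intro k hk
    exact key_map n w d hd j k hk
  · intro k hk
    have := key_map n w d hd (n + 1 - j) k hk
    rwa [hjj] at this
  · intro k hk
    simp only [mem_filter, mem_range] at hk
    omega
  · intro k hk
    simp only [mem_filter, mem_range] at hk
    omega
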